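/- arXiv:2112.12479 — 2 statements merged into one kernel-verified Lean document; each statement's English description precedes it below -/
import Mathlib

section
/- Let π ∈ S_n, 1 ≤ k ≤ n−1, with reduced decomposition (i_1,…,i_l), and suppose π(j) < π(n) for all k ≤ j ≤ n−1. Then (i_1,…,i_l, n−1, n−2, …, k) is a reduced decomposition of π s_{n−1} s_{n−2} ⋯ s_k. -/
/-!
The length of a reduced decomposition of `σ` equals the number of inversions of `σ`:
right multiplication by an adjacent transposition `s_i` changes the inversion count by exactly
one, increasing it iff `i` is an ascent of `σ`, and every `σ ≠ 1` has a descent. Along the word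
`s_{n-1} ⋯ s_k` the entry `π(n)` travels from position `n` down to position `k`, each step
swapping it past one of the smaller entries `π(j)`, so every step adds an inversion.
-/

namespace Stmt

/-- The adjacent transposition `s_{i+1} = (i, i+1)` (0-based) in the symmetric group on
`Fin m`; indices out of range give the identity. -/
def sNat (m i : ℕ) : Equiv.Perm (Fin m) :=
  if h : i + 1 < m then Equiv.swap ⟨i, by omega⟩ ⟨i + 1, h⟩ else 1

/-- The permutation represented by a word in the adjacent transpositions. -/
def toPerm (m : ℕ) (l : List ℕ) : Equiv.Perm (Fin m) := (l.map (sNat m)).prod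

/-- `l` is a reduced decomposition of `π`: it represents `π` and has minimal length among
all words representing `π`. -/
def IsReduced (m : ℕ) (l : List ℕ) (π : Equiv.Perm (Fin m)) : Prop :=
  toPerm m l = π ∧ ∀ l' : List ℕ, toPerm m l' = π → l.length ≤ l'.length

end Stmt

open Equiv Finset

namespace Stmt

section LinearOrder

variable {α : Type*} [LinearOrder α]

theorem swap_lt_swap_of_covBy {a b x y : α} (hab : a ⋖ b) (hxy : x < y)
    (hne : (x, y) ≠ (a, b)) : swap a b x < swap a b y := by
  rcases eq_or_ne x a with rfl | hxa
  · have hyb : y ≠ b := fun h => hne (by rw [h])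
    rw [swap_apply_left, swap_apply_of_ne_of_ne hxy.ne' hyb]
    exact (hab.ge_of_gt hxy).lt_of_ne hyb.symm
  rcases eq_or_ne x b with rfl | hxb
  · rw [swap_apply_right, swap_apply_of_ne_of_ne (hab.lt.trans hxy).ne' hxy.ne']
    exact hab.lt.trans hxy
  rw [swap_apply_of_ne_of_ne hxa hxb]
  rcases eq_or_ne y a with rfl | hya
  · rw [swap_apply_left]
    exact hxy.trans hab.lt
  rcases eq_or_ne y b with rfl | hyb
  · rw [swap_apply_right]
    exact (hab.le_of_lt hxy).lt_of_ne hxa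
  rwa [swap_apply_of_ne_of_ne hya hyb]

variable [Fintype α]

def inversions (σ : Perm α) : Finset (α × α) := {p | p.1 < p.2 ∧ σ p.2 < σ p.1}

@[simp]
theorem mem_inversions {σ : Perm α} {p : α × α} :
    p ∈ inversions σ ↔ p.1 < p.2 ∧ σ p.2 < σ p.1 := by
  simp [inversions]

theorem inversions_eq_empty_iff {σ : Perm α} : inversions σ = ∅ ↔ σ = 1 := by
  constructor
  · intro h
    have hmono : StrictMono σ := fun x y hxy => by
      have hxy' : (x, y) ∉ inversions σ := by simp [h]
      simp only [mem_inversions, hxy, true_and, not_lt] at hxy'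
      exact hxy'.lt_of_ne (σ.injective.ne hxy.ne)
    ext x
    rw [hmono.apply_eq, Perm.one_apply]
  · rintro rfl
    ext ⟨x, y⟩
    simpa using lt_asymm (a := x)

variable {a b : α}

theorem mapsTo_inversions_mul_swap (hab : a ⋖ b) (σ : Perm α) :
    Set.MapsTo (Prod.map (swap a b) (swap a b))
      ((inversions (σ * swap a b)).erase (a, b)) ((inversions σ).erase (a, b)) := by
  rintro ⟨x, y⟩ hp
  simp only [coe_erase, Set.mem_sdiff, mem_coe, mem_inversions, Perm.mul_apply,
    Set.mem_singleton_iff, Prod.map_apply] at hp ⊢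
  obtain ⟨⟨hxy, hσ⟩, hne⟩ := hp
  refine ⟨⟨swap_lt_swap_of_covBy hab hxy hne, hσ⟩, fun h => ?_⟩
  rw [Prod.mk.injEq, swap_apply_eq_iff, swap_apply_eq_iff, swap_apply_left,
    swap_apply_right] at h
  exact hab.lt.not_gt (h.1 ▸ h.2 ▸ hxy)

theorem card_inversions_mul_swap_erase (hab : a ⋖ b) (σ : Perm α) :
    #((inversions (σ * swap a b)).erase (a, b)) = #((inversions σ).erase (a, b)) :=
  have hinv : Function.Involutive (Prod.map (swap a b) (swap a b)) :=
    Function.Involutive.prodMap (swap_apply_self a b) (swap_apply_self a b)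
  card_nbij' _ _ (mapsTo_inversions_mul_swap hab σ)
    (by simpa only [mul_swap_mul_self] using mapsTo_inversions_mul_swap hab (σ * swap a b))
    (fun p _ => hinv p) (fun p _ => hinv p)

theorem card_inversions_mul_swap_of_lt (hab : a ⋖ b) {σ : Perm α} (h : σ a < σ b) :
    #(inversions (σ * swap a b)) = #(inversions σ) + 1 := by
  have hmem : (a, b) ∈ inversions (σ * swap a b) := by simp [hab.lt, h]
  have hnmem : (a, b) ∉ inversions σ := by simp [h.le]
  rw [← card_erase_add_one hmem, card_inversions_mul_swap_erase hab, erase_eq_of_notMem hnmem]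

theorem card_inversions_mul_swap_of_gt (hab : a ⋖ b) {σ : Perm α} (h : σ b < σ a) :
    #(inversions (σ * swap a b)) + 1 = #(inversions σ) := by
  simpa [mul_swap_mul_self] using
    (card_inversions_mul_swap_of_lt hab (σ := σ * swap a b) (by simpa using h)).symm

theorem card_inversions_mul_swap_le (hab : a ⋖ b) (σ : Perm α) :
    #(inversions (σ * swap a b)) ≤ #(inversions σ) + 1 := by
  rcases (σ.injective.ne hab.lt.ne).lt_or_gt with h | h
  · exact (card_inversions_mul_swap_of_lt hab h).le
  · rw [← card_inversions_mul_swap_of_gt hab h]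
    omega

end LinearOrder

variable {m : ℕ}

theorem mk_covBy_mk_succ {i : ℕ} (h : i + 1 < m) :
    (⟨i, by omega⟩ : Fin m) ⋖ ⟨i + 1, h⟩ :=
  ⟨Fin.mk_lt_mk.2 (by omega), fun c h₁ h₂ => by
    rw [Fin.lt_def] at h₁ h₂
    simp only at h₁ h₂
    omega⟩

theorem sNat_of_lt {i : ℕ} (h : i + 1 < m) : sNat m i = swap ⟨i, by omega⟩ ⟨i + 1, h⟩ :=
  dif_pos h

theorem card_inversions_mul_sNat_le (σ : Perm (Fin m)) (i : ℕ) :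
    #(inversions (σ * sNat m i)) ≤ #(inversions σ) + 1 := by
  unfold sNat
  split_ifs with h
  · exact card_inversions_mul_swap_le (mk_covBy_mk_succ h) σ
  · simp

theorem exists_apply_succ_lt_of_ne_one {σ : Perm (Fin m)} (hσ : σ ≠ 1) :
    ∃ i, ∃ h : i + 1 < m, σ ⟨i + 1, h⟩ < σ ⟨i, by omega⟩ := by
  by_contra! hasc
  apply hσ
  cases m with
  | zero => exact Subsingleton.elim _ _
  | succ m =>
    have hmono : StrictMono σ := Fin.strictMono_iff_lt_succ.2 fun i =>
      (hasc i i.succ.2).lt_of_ne (σ.injective.ne (Fin.castSucc_lt_succ).ne)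
    ext x
    rw [hmono.apply_eq, Perm.one_apply]

theorem toPerm_append (l₁ l₂ : List ℕ) :
    toPerm m (l₁ ++ l₂) = toPerm m l₁ * toPerm m l₂ := by
  simp [toPerm]

theorem toPerm_concat (l : List ℕ) (i : ℕ) : toPerm m (l ++ [i]) = toPerm m l * sNat m i := by
  simp [toPerm]

theorem card_inversions_toPerm_le (l : List ℕ) : #(inversions (toPerm m l)) ≤ l.length := by
  induction l using List.reverseRecOn with
  | nil => simp [toPerm, inversions_eq_empty_iff]
  | append_singleton l i ih =>
    rw [toPerm_concat, List.length_append, List.length_singleton]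
    exact (card_inversions_mul_sNat_le _ i).trans (by omega)

theorem exists_toPerm_eq_length_eq (σ : Perm (Fin m)) :
    ∃ l, toPerm m l = σ ∧ l.length = #(inversions σ) := by
  induction hN : #(inversions σ) generalizing σ with
  | zero =>
    rw [card_eq_zero, inversions_eq_empty_iff] at hN
    exact ⟨[], by simp [toPerm, hN], rfl⟩
  | succ N ih =>
    have hσ : σ ≠ 1 := by
      rintro rfl
      simp [inversions_eq_empty_iff.2 rfl] at hN
    obtain ⟨i, h, hdesc⟩ := exists_apply_succ_lt_of_ne_one hσ
    have hstep := card_inversions_mul_swap_of_gt (mk_covBy_mk_succ h) hdesc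
    obtain ⟨l, hl, hlen⟩ := ih (σ * sNat m i) (by rw [sNat_of_lt h]; omega)
    refine ⟨l ++ [i], ?_, by simp [hlen]⟩
    rw [toPerm_concat, hl, sNat_of_lt h, mul_swap_mul_self]

theorem isReduced_iff {l : List ℕ} {σ : Perm (Fin m)} :
    IsReduced m l σ ↔ toPerm m l = σ ∧ l.length = #(inversions σ) := by
  constructor
  · rintro ⟨hl, hmin⟩
    obtain ⟨l', hl', hlen'⟩ := exists_toPerm_eq_length_eq σ
    exact ⟨hl, le_antisymm (hlen' ▸ hmin l' hl') (hl ▸ card_inversions_toPerm_le l)⟩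
  · rintro ⟨hl, hlen⟩
    exact ⟨hl, fun l' hl' => hlen ▸ hl' ▸ card_inversions_toPerm_le l'⟩

/-- In the 1-based notation of the paper, the word `s_{n-1} s_{n-2} ⋯ s_{n-c}`. -/
def descWord (n c : ℕ) : List ℕ := (List.range c).map (fun t => n - 2 - t)

theorem descWord_succ (n c : ℕ) : descWord n (c + 1) = descWord n c ++ [n - 2 - c] := by
  simp [descWord, List.range_succ]

variable {n c : ℕ}

theorem toPerm_descWord_apply_of_lt {x : Fin n} (hx : x < n - 1 - c) :
    toPerm n (descWord n c) x = x := by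
  induction c with
  | zero => simp [descWord, toPerm]
  | succ c ih =>
    rw [descWord_succ, toPerm_concat, Perm.mul_apply, sNat_of_lt (by omega),
      swap_apply_of_ne_of_ne (Fin.ne_of_val_ne (by simp only; omega))
        (Fin.ne_of_val_ne (by simp only; omega)), ih (by omega)]

theorem toPerm_descWord_apply (hc : c < n) {x : Fin n} (hx : (x : ℕ) = n - 1 - c) :
    toPerm n (descWord n c) x = ⟨n - 1, by omega⟩ := by
  induction c generalizing x with
  | zero => simp [descWord, toPerm, Fin.ext_iff, hx]
  | succ c ih =>
    have hlt : n - 2 - c + 1 < n := by omega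
    have hswap :
        swap ⟨n - 2 - c, by omega⟩ ⟨n - 2 - c + 1, hlt⟩ x = ⟨n - 2 - c + 1, hlt⟩ := by
      rw [show x = ⟨n - 2 - c, by omega⟩ from Fin.ext (by simp only; omega), swap_apply_left]
    rw [descWord_succ, toPerm_concat, Perm.mul_apply, sNat_of_lt hlt, hswap]
    exact ih (by omega) (by simp only; omega)

theorem card_inversions_mul_toPerm_descWord (π : Perm (Fin n)) (hc : c < n)
    (hπ : ∀ j : Fin n, n - 1 - c ≤ j → j ≤ n - 2 → π j < π ⟨n - 1, by omega⟩) :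
    #(inversions (π * toPerm n (descWord n c))) = #(inversions π) + c := by
  induction c with
  | zero => simp [descWord, toPerm]
  | succ c ih =>
    have hlt : n - 2 - c + 1 < n := by omega
    have hasc : (π * toPerm n (descWord n c)) ⟨n - 2 - c, by omega⟩ <
        (π * toPerm n (descWord n c)) ⟨n - 2 - c + 1, hlt⟩ := by
      rw [Perm.mul_apply, Perm.mul_apply, toPerm_descWord_apply_of_lt (by simp only; omega),
        toPerm_descWord_apply (by omega) (by simp only; omega)]
      exact hπ _ (by simp only; omega) (by simp only; omega)
    rw [descWord_succ, toPerm_concat, ← mul_assoc, sNat_of_lt hlt,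
      card_inversions_mul_swap_of_lt (mk_covBy_mk_succ hlt) hasc,
      ih (by omega) fun j hj => hπ j (by omega), add_assoc]

/-- Let `π ∈ S_n`, `1 ≤ k ≤ n−1`, with reduced decomposition
`(i_1,…,i_l)`, and suppose `π(j) < π(n)` for all `k ≤ j ≤ n−1` (1-based positions).
Then `(i_1,…,i_l, n−1, n−2, …, k)` is a reduced decomposition of `π s_{n−1} ⋯ s_k`.
(Indices are 0-based, so the generator `s_j` of the paper corresponds to index `j−1`.) -/
theorem reduced_append_desc (n k : ℕ) (hk : 1 ≤ k) (hkn : k ≤ n - 1)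
    (π : Equiv.Perm (Fin n)) (l : List ℕ) (hl : IsReduced n l π)
    (hmono : ∀ j : Fin n, k - 1 ≤ (j : ℕ) → (j : ℕ) ≤ n - 2 →
      π j < π ⟨n - 1, by omega⟩) :
    IsReduced n (l ++ (List.range (n - k)).map (fun t => n - 2 - t))
      (π * toPerm n ((List.range (n - k)).map (fun t => n - 2 - t))) := by
  have hcount : #(inversions (π * toPerm n (descWord n (n - k)))) = #(inversions π) + (n - k) :=
    card_inversions_mul_toPerm_descWord π (by omega) fun j hj => hmono j (by omega)
  rw [isReduced_iff] at hl ⊢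
  refine ⟨by rw [toPerm_append, hl.1], ?_⟩
  rw [List.length_append, List.length_map, List.length_range, hl.2]
  exact hcount.symm

end Stmt
end

section
/- Let k be a field and D a Dynkin datum (D_j, D_{jk} ∈ k^×) on θ vertices. Fix i and assume D is i-finite with Cartan integers a_{ij} = a_{ij}^D, and assume m_i := min{ m ∈ ℕ₀ : (m+1)_{D_i} = 0 } exists. Then for every j: (1) D_{ij}^{m_i + a_{ij}} · D_i^{−a_{ij}(1 + 2 m_i + a_{ij})} = 1; (2) D_j · D_{ij}^{m_i} · D_i^{−a_{ij}(2 m_i + 1)} = R_i(D)_j. -/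
namespace Stmt

/-- A Dynkin datum on `θ` vertices over a field `k`: vertex labels `D_j ∈ k^×` and edge
labels `D_{jl} ∈ k^×`.  (The conditions `D_{jl} = D_{lj}` and `D_{jj} = D_j²` are recorded
in `IsDynkin`.) -/
structure DynkinDatum (k : Type*) [Field k] (θ : ℕ) where
  v : Fin θ → kˣ
  e : Fin θ → Fin θ → kˣ

variable {k : Type*} [Field k] {θ : ℕ}

/-- The conventions on the labels of a Dynkin datum: `D_{jl} = D_{lj}` and `D_{jj} = D_j²`. -/
def IsDynkin (D : DynkinDatum k θ) : Prop :=
  (∀ j l, D.e j l = D.e l j) ∧ (∀ j, D.e j j = D.v j * D.v j)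

/-- The q-integer `(m)_a = 1 + a + ⋯ + a^{m−1}`. -/
def qInt (a : k) (m : ℕ) : k := ∑ i ∈ Finset.range m, a ^ i

/-- The set `{ m ∈ ℕ₀ : (m+1)_{D_i} (D_i^m D_{ij} − 1) = 0 }` whose minimum is `−a_{ij}`. -/
def cartanSet (D : DynkinDatum k θ) (i j : Fin θ) : Set ℕ :=
  {m : ℕ | qInt (D.v i : k) (m + 1) * ((D.v i : k) ^ m * (D.e i j : k) - 1) = 0}

/-- The Cartan-type integers of a Dynkin datum: `a_{ii} = 2` and, for `j ≠ i`,
`a_{ij} = −min{ m : (m+1)_{D_i} (D_i^m D_{ij} − 1) = 0 }`. -/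
noncomputable def aij (D : DynkinDatum k θ) (i j : Fin θ) : ℤ :=
  if i = j then 2 else -(Int.ofNat (sInf (cartanSet D i j)))

/-- `D` is `i`-finite: the minima defining `a_{ij}` exist for all `j ≠ i`. -/
def IFinite (D : DynkinDatum k θ) (i : Fin θ) : Prop :=
  ∀ j, j ≠ i → (cartanSet D i j).Nonempty

/-- The `i`-th reflection `R_i(D)` of a Dynkin datum:
`R_i(D)_j = D_j D_{ij}^{−a_{ij}} D_i^{a_{ij}²}` and
`R_i(D)_{jl} = D_{jl} D_{il}^{−a_{ij}} D_{ij}^{−a_{il}} D_i^{2 a_{ij} a_{il}}`. -/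
noncomputable def reflect (D : DynkinDatum k θ) (i : Fin θ) : DynkinDatum k θ where
  v j := D.v j * D.e i j ^ (-aij D i j) * D.v i ^ (aij D i j ^ 2)
  e j l := D.e j l * D.e i l ^ (-aij D i j) * D.e i j ^ (-aij D i l) *
    D.v i ^ (2 * aij D i j * aij D i l)

/-- The set `{ m ∈ ℕ₀ : (m+1)_{D_i} = 0 }` whose minimum is `m_i^D`. -/
def qSet (D : DynkinDatum k θ) (i : Fin θ) : Set ℕ :=
  {m : ℕ | qInt (D.v i : k) (m + 1) = 0}

end Stmt

/-!
Write `q = D_i` and `m = m_i`. Since `(q - 1)·(m+1)_q = q^{m+1} - 1`, we have `q^{m+1} = 1`, so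
exponents of `q` only matter modulo `m + 1`. As `m` itself lies in the set defining `-a_{ij}`,
either `-a_{ij} = m`, or `-a_{ij} < m`, in which case `(1 - a_{ij})_q ≠ 0` forces
`D_{ij} = q^{a_{ij}}`; for `j = i` also `D_{ii} = q^2 = q^{a_{ii}}`. In both cases the two
identities reduce to congruences of exponents modulo `m + 1`.
-/

namespace Stmt

theorem zpow_eq_zpow_of_pow_eq_one {G : Type*} [Group G] {q : G} {n : ℕ} (hq : q ^ n = 1)
    {s t : ℤ} (h : (n : ℤ) ∣ t - s) : q ^ s = q ^ t :=
  zpow_eq_zpow_iff_modEq.2 <| Int.modEq_iff_dvd.2 <|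
    (Int.natCast_dvd_natCast.2 (orderOf_dvd_of_pow_eq_one hq)).trans h

theorem vertex_identities_of_pow_succ_eq_one {G : Type*} [CommGroup G] {q e : G} {m : ℕ} {a : ℤ}
    (hq : q ^ (m + 1) = 1) (he : e = q ^ a ∨ a = -m) (d : G) :
    e ^ ((m : ℤ) + a) * q ^ (-a * (1 + 2 * m + a)) = 1 ∧
      d * e ^ (m : ℤ) * q ^ (-a * (2 * m + 1)) = d * e ^ (-a) * q ^ (a ^ 2) := by
  rcases he with rfl | rfl
  · simp only [← zpow_mul, mul_assoc, ← zpow_add]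
    refine ⟨(zpow_eq_zpow_of_pow_eq_one hq ⟨a, by push_cast; ring⟩).trans (zpow_zero q),
      congrArg (d * ·) (zpow_eq_zpow_of_pow_eq_one hq ⟨a, by push_cast; ring⟩)⟩
  · simp only [add_neg_cancel, zpow_zero, one_mul, neg_neg, mul_assoc]
    refine ⟨(zpow_eq_zpow_of_pow_eq_one hq ⟨-m, by push_cast; ring⟩).trans (zpow_zero q),
      congrArg (fun x => d * (e ^ (m : ℤ) * x))
        (zpow_eq_zpow_of_pow_eq_one hq ⟨-m, by push_cast; ring⟩)⟩

theorem pow_eq_one_of_qInt_eq_zero {k : Type*} [Field k] {a : k} {n : ℕ} (h : qInt a n = 0) :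
    a ^ n = 1 := by
  have := geom_sum_mul a n
  rwa [← qInt, h, zero_mul, eq_comm, sub_eq_zero] at this

section

variable {k : Type*} [Field k] {θ : ℕ} {D : DynkinDatum k θ} {i : Fin θ}

theorem aij_self : aij D i i = 2 := if_pos rfl

theorem aij_of_ne {j : Fin θ} (hij : i ≠ j) :
    aij D i j = -((sInf (cartanSet D i j) : ℕ) : ℤ) :=
  if_neg hij

theorem qSet_subset_cartanSet (j : Fin θ) : qSet D i ⊆ cartanSet D i j := fun m hm => by
  simp only [cartanSet, Set.mem_ofPred_eq, show qInt (D.v i : k) (m + 1) = 0 from hm, zero_mul]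

theorem edge_eq_zpow_aij_or_aij_eq_neg (hD : IsDynkin D) (hfin : IFinite D i)
    (hmi : (qSet D i).Nonempty) (j : Fin θ) :
    D.e i j = D.v i ^ aij D i j ∨ aij D i j = -((sInf (qSet D i) : ℕ) : ℤ) := by
  rcases eq_or_ne i j with rfl | hij
  · exact .inl (by rw [aij_self, hD.2, zpow_two])
  set m' := sInf (cartanSet D i j)
  have hm'_le : m' ≤ sInf (qSet D i) := Nat.sInf_le (qSet_subset_cartanSet j (Nat.sInf_mem hmi))
  rcases hm'_le.eq_or_lt with heq | hlt
  · exact .inr ((aij_of_ne hij).trans (congrArg (fun n : ℕ => -(n : ℤ)) heq))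
  left
  have hq : qInt (D.v i : k) (m' + 1) ≠ 0 := fun h => Nat.notMem_of_lt_sInf hlt h
  have hprod : (D.v i : k) ^ m' * D.e i j = 1 :=
    sub_eq_zero.1 ((mul_eq_zero.1 (Nat.sInf_mem (hfin j (Ne.symm hij)))).resolve_left hq)
  rw [aij_of_ne hij, zpow_neg, zpow_natCast, eq_inv_iff_mul_eq_one, mul_comm]
  exact Units.ext (by push_cast; exact hprod)

end

/-- Let `D` be an `i`-finite Dynkin datum such that
`m_i = min{ m : (m+1)_{D_i} = 0 }` exists.  Then for every `j`:
(1) `D_{ij}^{m_i + a_{ij}} · D_i^{−a_{ij}(1 + 2 m_i + a_{ij})} = 1`;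
(2) `D_j · D_{ij}^{m_i} · D_i^{−a_{ij}(2 m_i + 1)} = R_i(D)_j`. -/
theorem reflect_vertex_formula {k : Type*} [Field k] {θ : ℕ}
    (D : DynkinDatum k θ) (hD : IsDynkin D) (i : Fin θ) (hfin : IFinite D i)
    (hmi : (qSet D i).Nonempty) :
    ∀ j : Fin θ,
      D.e i j ^ (Int.ofNat (sInf (qSet D i)) + aij D i j) *
          D.v i ^ (-(aij D i j) * (1 + 2 * Int.ofNat (sInf (qSet D i)) + aij D i j)) = 1 ∧
      D.v j * D.e i j ^ (Int.ofNat (sInf (qSet D i))) *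
          D.v i ^ (-(aij D i j) * (2 * Int.ofNat (sInf (qSet D i)) + 1)) =
        (reflect D i).v j := by
  intro j
  have hq : D.v i ^ (sInf (qSet D i) + 1) = 1 :=
    Units.ext (by push_cast; exact pow_eq_one_of_qInt_eq_zero (Nat.sInf_mem hmi))
  exact vertex_identities_of_pow_succ_eq_one hq
    (edge_eq_zpow_aij_or_aij_eq_neg hD hfin hmi j) (D.v j)

end Stmt
end
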